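/- arXiv:2411.16179 — 5 statements merged into one kernel-verified Lean document; each statement's English description precedes it below -/
import Mathlib

section
/- Let Λ be a finite-dimensional k-algebra with a nondegenerate associative bilinear form ⟨-,-⟩_Λ, and let G be a finite group acting on Λ by k-algebra automorphisms. Then the bilinear form on the skew group algebra ΛG defined by ⟨λ ⊗ g, λ' ⊗ g'⟩ = ⟨λ, g(λ')⟩_Λ if gg' = e and 0 otherwise is associative, i.e. ⟨x, yz⟩ = ⟨xy, z⟩ for all x, y, z ∈ ΛG. -/
/-- The multiplication of the skew group algebra `ΛG`, modeled on the vector space of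
functions `G → Λ` (the element `λ ⊗ g` being `Pi.single g λ`), where the finite group `G`
acts on `Λ` via `ρ : G →* (Λ ≃ₐ[k] Λ)`.  It is the bilinear extension of
`(λ ⊗ g)(λ' ⊗ g') = λ g(λ') ⊗ gg'`. -/
def skewMul {k Λ G : Type*} [Field k] [Ring Λ] [Algebra k Λ] [Group G] [Fintype G]
    (ρ : G →* (Λ ≃ₐ[k] Λ)) (f f' : G → Λ) : G → Λ :=
  fun x => ∑ g : G, f g * ρ g (f' (g⁻¹ * x))

/-- The bilinear form on the skew group algebra `ΛG` which is the bilinear extension of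
`⟨λ ⊗ g, λ' ⊗ g'⟩ = ⟨λ, g(λ')⟩_Λ` if `gg' = e` and `0` otherwise. -/
def skewForm {k Λ G : Type*} [Field k] [Ring Λ] [Algebra k Λ] [Group G] [Fintype G]
    (ρ : G →* (Λ ≃ₐ[k] Λ)) (B : Λ → Λ → k) (f f' : G → Λ) : k :=
  ∑ g : G, B (f g) (ρ g (f' g⁻¹))

/-!
Both sides of `⟨xy, z⟩ = ⟨x, yz⟩` expand to the sum over pairs `(h, u)` of
`⟨x_h, h(y_u) · (hu)(z_{(hu)⁻¹})⟩_Λ`: on the left once associativity of `⟨-,-⟩_Λ` moves the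
factor `h(y_{h⁻¹g})` into the second argument and `g` is reindexed as `hu`, on the right
because `h` acts multiplicatively and `ρ h ∘ ρ u = ρ (hu)`.
-/

section SkewForm

variable {k Λ G : Type*} [Field k] [Ring Λ] [Algebra k Λ] [Group G] [Fintype G]
  (ρ : G →* (Λ ≃ₐ[k] Λ)) {B : Λ → Λ → k}

theorem skewForm_single_single [DecidableEq G]
    (hadd_l : ∀ x x' y : Λ, B (x + x') y = B x y + B x' y)
    (hadd_r : ∀ x y y' : Λ, B x (y + y') = B x y + B x y') (g g' : G) (a b : Λ) :
    skewForm ρ B (Pi.single g a) (Pi.single g' b) = if g * g' = 1 then B a (ρ g b) else 0 := by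
  have hB0l : ∀ y, B 0 y = 0 := fun y => map_zero (AddMonoidHom.mk' (B · y) (hadd_l · · y))
  have hB0r : ∀ x, B x 0 = 0 := fun x => map_zero (AddMonoidHom.mk' (B x) (hadd_r x))
  rw [skewForm, Fintype.sum_eq_single g fun h hne => by rw [Pi.single_eq_of_ne hne, hB0l],
    Pi.single_eq_same]
  by_cases h : g * g' = 1
  · rw [if_pos h, inv_eq_of_mul_eq_one_right h, Pi.single_eq_same]
  · rw [if_neg h, Pi.single_eq_of_ne fun hc => h (by rw [← hc, mul_inv_cancel]), map_zero, hB0r]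

theorem skewForm_skewMul_left (hadd_l : ∀ x x' y : Λ, B (x + x') y = B x y + B x' y)
    (hassoc : ∀ x y z : Λ, B (x * y) z = B x (y * z)) (x y z : G → Λ) :
    skewForm ρ B (skewMul ρ x y) z =
      ∑ h : G, ∑ u : G, B (x h) (ρ h (y u) * ρ (h * u) (z (h * u)⁻¹)) := by
  have hsum_l : ∀ (f : G → Λ) (w : Λ), B (∑ i, f i) w = ∑ i, B (f i) w := fun f w =>
    map_sum (AddMonoidHom.mk' (B · w) (hadd_l · · w)) f Finset.univ
  simp only [skewForm, skewMul, hsum_l, hassoc]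
  rw [Finset.sum_comm]
  refine Fintype.sum_congr _ _ fun h => ?_
  rw [← Equiv.sum_comp (Equiv.mulLeft h)]
  simp

theorem skewForm_skewMul_right (hadd_r : ∀ x y y' : Λ, B x (y + y') = B x y + B x y')
    (x y z : G → Λ) :
    skewForm ρ B x (skewMul ρ y z) =
      ∑ h : G, ∑ u : G, B (x h) (ρ h (y u) * ρ (h * u) (z (h * u)⁻¹)) := by
  have hsum_r : ∀ (w : Λ) (f : G → Λ), B w (∑ i, f i) = ∑ i, B w (f i) := fun w f =>
    map_sum (AddMonoidHom.mk' (B w) (hadd_r w)) f Finset.univ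
  simp only [skewForm, skewMul, map_sum, hsum_r, map_mul, mul_inv_rev, AlgEquiv.mul_apply]

end SkewForm

theorem stmt_1_general (k Λ G : Type*) [Field k] [Ring Λ] [Algebra k Λ]
    [Group G] [Fintype G] [DecidableEq G]
    (ρ : G →* (Λ ≃ₐ[k] Λ)) (B : Λ → Λ → k)
    -- `B` is bilinear
    (hadd_l : ∀ x x' y : Λ, B (x + x') y = B x y + B x' y)
    (hadd_r : ∀ x y y' : Λ, B x (y + y') = B x y + B x y')
    -- `B` is associative
    (hassoc : ∀ x y z : Λ, B (x * y) z = B x (y * z)) :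
    -- the form on `ΛG` takes the stated values on elements `λ ⊗ g`
    (∀ (g g' : G) (a b : Λ), skewForm ρ B (Pi.single g a) (Pi.single g' b) =
      if g * g' = 1 then B a (ρ g b) else 0) ∧
    -- and it is associative: ⟨x, yz⟩ = ⟨xy, z⟩ for all x, y, z in ΛG
    (∀ x y z : G → Λ,
      skewForm ρ B (skewMul ρ x y) z = skewForm ρ B x (skewMul ρ y z)) :=
  ⟨skewForm_single_single ρ hadd_l hadd_r, fun x y z => by
    rw [skewForm_skewMul_left ρ hadd_l hassoc, skewForm_skewMul_right ρ hadd_r]⟩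

/-- If `Λ` is a finite-dimensional `k`-algebra with a nondegenerate
associative bilinear form `B`, and the finite group `G` acts on `Λ` by `k`-algebra
automorphisms, then the bilinear form on `ΛG` given by
`⟨λ ⊗ g, λ' ⊗ g'⟩ = ⟨λ, g(λ')⟩` if `gg' = e` and `0` otherwise is associative. -/
theorem stmt_1 (k Λ G : Type*) [Field k] [Ring Λ] [Algebra k Λ] [FiniteDimensional k Λ]
    [Group G] [Fintype G] [DecidableEq G]
    (ρ : G →* (Λ ≃ₐ[k] Λ)) (B : Λ → Λ → k)
    -- `B` is bilinear
    (hadd_l : ∀ x x' y : Λ, B (x + x') y = B x y + B x' y)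
    (hsmul_l : ∀ (c : k) (x y : Λ), B (c • x) y = c * B x y)
    (hadd_r : ∀ x y y' : Λ, B x (y + y') = B x y + B x y')
    (hsmul_r : ∀ (c : k) (x y : Λ), B x (c • y) = c * B x y)
    -- `B` is associative
    (hassoc : ∀ x y z : Λ, B (x * y) z = B x (y * z))
    -- `B` is nondegenerate
    (hnd : ∀ x : Λ, (∀ y : Λ, B x y = 0) → x = 0) :
    -- the form on `ΛG` takes the stated values on elements `λ ⊗ g`
    (∀ (g g' : G) (a b : Λ), skewForm ρ B (Pi.single g a) (Pi.single g' b) =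
      if g * g' = 1 then B a (ρ g b) else 0) ∧
    -- and it is associative: ⟨x, yz⟩ = ⟨xy, z⟩ for all x, y, z in ΛG
    (∀ x y z : G → Λ,
      skewForm ρ B (skewMul ρ x y) z = skewForm ρ B x (skewMul ρ y z)) :=
  stmt_1_general k Λ G ρ B hadd_l hadd_r hassoc
end

section
/- Let Λ be a finite-dimensional k-algebra with a nondegenerate associative bilinear form ⟨-,-⟩_Λ, and let G be a finite group acting on Λ by k-algebra automorphisms. Then the bilinear form on the skew group algebra ΛG defined by ⟨λ ⊗ g, λ' ⊗ g'⟩ = ⟨λ, g(λ')⟩_Λ if gg' = e and 0 otherwise is nondegenerate: if x ∈ ΛG satisfies ⟨x, y⟩ = 0 for all y ∈ ΛG, then x = 0. Consequently ΛG is a Frobenius algebra. -/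
/-!
Transport the form on `Λ` along the action: `⟨x, y⟩ = ∑_g B (x g) (g (y g⁻¹))`. Pairing `x` with
`λ ⊗ g` picks out the single term `B (x g⁻¹) (g⁻¹ λ)`, so nondegeneracy of `B` and bijectivity of
`g⁻¹` force every coefficient of a radical element to vanish. Associativity reduces, after expanding
both products, to associativity of `B` and the reindexing `g ↦ h⁻¹ g` of the inner sum.
-/

namespace SkewGroupAlgebra

variable {k Λ G : Type*} [Field k] [Ring Λ] [Algebra k Λ] [Group G] [Fintype G]
  (ρ : G →* (Λ ≃ₐ[k] Λ)) (B : Λ →ₗ[k] Λ →ₗ[k] k)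

theorem skewForm_add_left (x x' y : G → Λ) :
    skewForm ρ (B · ·) (x + x') y = skewForm ρ (B · ·) x y + skewForm ρ (B · ·) x' y := by
  simp only [skewForm, Pi.add_apply, map_add, LinearMap.add_apply, Finset.sum_add_distrib]

theorem skewForm_smul_left (c : k) (x y : G → Λ) :
    skewForm ρ (B · ·) (c • x) y = c * skewForm ρ (B · ·) x y := by
  simp only [skewForm, Pi.smul_apply, map_smul, LinearMap.smul_apply, smul_eq_mul, Finset.mul_sum]

theorem skewForm_add_right (x y y' : G → Λ) :
    skewForm ρ (B · ·) x (y + y') = skewForm ρ (B · ·) x y + skewForm ρ (B · ·) x y' := by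
  simp only [skewForm, Pi.add_apply, map_add, Finset.sum_add_distrib]

theorem skewForm_smul_right (c : k) (x y : G → Λ) :
    skewForm ρ (B · ·) x (c • y) = c * skewForm ρ (B · ·) x y := by
  simp only [skewForm, Pi.smul_apply, map_smul, smul_eq_mul, Finset.mul_sum]

theorem skewForm_single_right [DecidableEq G] (x : G → Λ) (g : G) (b : Λ) :
    skewForm ρ (B · ·) x (Pi.single g b) = B (x g⁻¹) (ρ g⁻¹ b) := by
  rw [skewForm, Finset.sum_eq_single g⁻¹ (fun h _ hh => ?_) (by simp)]
  · simp
  · rw [Pi.single_eq_of_ne (mt inv_eq_iff_eq_inv.mp hh), map_zero, map_zero]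

theorem skewForm_single_single [DecidableEq G] (g g' : G) (a b : Λ) :
    skewForm ρ (B · ·) (Pi.single g a) (Pi.single g' b) =
      if g * g' = 1 then B a (ρ g b) else 0 := by
  rw [skewForm_single_right]
  by_cases h : g * g' = 1
  · obtain rfl : g'⁻¹ = g := (eq_inv_of_mul_eq_one_left h).symm
    simp
  · have hne : g'⁻¹ ≠ g := fun hg => h (by rw [← hg, inv_mul_cancel])
    rw [Pi.single_eq_of_ne hne, map_zero, LinearMap.zero_apply, if_neg h]

theorem skewForm_separatingLeft (hB : B.SeparatingLeft) (x : G → Λ)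
    (hx : ∀ y, skewForm ρ (B · ·) x y = 0) : x = 0 := by
  classical
  funext g
  refine hB _ fun c => ?_
  have hxc := hx (Pi.single g⁻¹ ((ρ g).symm c))
  rwa [skewForm_single_right, inv_inv, AlgEquiv.apply_symm_apply] at hxc

theorem apply_skewMul_inv (y z : G → Λ) (h : G) :
    ρ h (skewMul ρ y z h⁻¹) = ∑ g, ρ h (y (h⁻¹ * g)) * ρ g (z g⁻¹) := by
  rw [skewMul, map_sum]
  refine Fintype.sum_equiv (Equiv.mulLeft h) _ _ fun g => ?_
  rw [Equiv.coe_mulLeft, map_mul, ← AlgEquiv.mul_apply, ← map_mul, inv_mul_cancel_left, mul_inv_rev]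

theorem skewForm_skewMul (hassoc : ∀ a b c : Λ, B (a * b) c = B a (b * c)) (x y z : G → Λ) :
    skewForm ρ (B · ·) (skewMul ρ x y) z = skewForm ρ (B · ·) x (skewMul ρ y z) := by
  calc skewForm ρ (B · ·) (skewMul ρ x y) z
      = ∑ g, ∑ h, B (x h) (ρ h (y (h⁻¹ * g)) * ρ g (z g⁻¹)) := by
        simp only [skewForm, skewMul, map_sum, LinearMap.sum_apply, hassoc]
    _ = ∑ h, ∑ g, B (x h) (ρ h (y (h⁻¹ * g)) * ρ g (z g⁻¹)) := Finset.sum_comm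
    _ = skewForm ρ (B · ·) x (skewMul ρ y z) := by
        simp only [skewForm, apply_skewMul_inv, map_sum]

end SkewGroupAlgebra

open SkewGroupAlgebra in
theorem stmt_2_general (k Λ G : Type*) [Field k] [Ring Λ] [Algebra k Λ]
    [Group G] [Fintype G] [DecidableEq G]
    (ρ : G →* (Λ ≃ₐ[k] Λ)) (B : Λ → Λ → k)
    -- `B` is bilinear
    (hadd_l : ∀ x x' y : Λ, B (x + x') y = B x y + B x' y)
    (hsmul_l : ∀ (c : k) (x y : Λ), B (c • x) y = c * B x y)
    (hadd_r : ∀ x y y' : Λ, B x (y + y') = B x y + B x y')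
    (hsmul_r : ∀ (c : k) (x y : Λ), B x (c • y) = c * B x y)
    -- `B` is associative
    (hassoc : ∀ x y z : Λ, B (x * y) z = B x (y * z))
    -- `B` is nondegenerate
    (hnd : ∀ x : Λ, (∀ y : Λ, B x y = 0) → x = 0) :
    -- the form on `ΛG` takes the stated values on elements `λ ⊗ g`
    (∀ (g g' : G) (a b : Λ), skewForm ρ B (Pi.single g a) (Pi.single g' b) =
      if g * g' = 1 then B a (ρ g b) else 0) ∧
    -- it is nondegenerate: if ⟨x, y⟩ = 0 for all y, then x = 0
    (∀ x : G → Λ, (∀ y : G → Λ, skewForm ρ B x y = 0) → x = 0) ∧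
    -- consequently, ΛG is a Frobenius algebra: it admits a nondegenerate associative
    -- bilinear form
    (∃ B' : (G → Λ) → (G → Λ) → k,
      (∀ x x' y, B' (x + x') y = B' x y + B' x' y) ∧
      (∀ (c : k) x y, B' (c • x) y = c * B' x y) ∧
      (∀ x y y', B' x (y + y') = B' x y + B' x y') ∧
      (∀ (c : k) x y, B' x (c • y) = c * B' x y) ∧
      (∀ x y z, B' (skewMul ρ x y) z = B' x (skewMul ρ y z)) ∧
      (∀ x, (∀ y, B' x y = 0) → x = 0)) := by
  let Bₗ : Λ →ₗ[k] Λ →ₗ[k] k := LinearMap.mk₂ k B hadd_l hsmul_l hadd_r hsmul_r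
  have hsep : ∀ x : G → Λ, (∀ y, skewForm ρ B x y = 0) → x = 0 :=
    skewForm_separatingLeft ρ Bₗ hnd
  exact ⟨skewForm_single_single ρ Bₗ, hsep, skewForm ρ B, skewForm_add_left ρ Bₗ,
    skewForm_smul_left ρ Bₗ, skewForm_add_right ρ Bₗ, skewForm_smul_right ρ Bₗ,
    skewForm_skewMul ρ Bₗ hassoc, hsep⟩

/-- If `Λ` is a finite-dimensional `k`-algebra with a nondegenerate
associative bilinear form `B`, and the finite group `G` acts on `Λ` by `k`-algebra
automorphisms, then the bilinear form on `ΛG` given by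
`⟨λ ⊗ g, λ' ⊗ g'⟩ = ⟨λ, g(λ')⟩` if `gg' = e` and `0` otherwise is nondegenerate.
Consequently `ΛG` is a Frobenius algebra. -/
theorem stmt_2 (k Λ G : Type*) [Field k] [Ring Λ] [Algebra k Λ] [FiniteDimensional k Λ]
    [Group G] [Fintype G] [DecidableEq G]
    (ρ : G →* (Λ ≃ₐ[k] Λ)) (B : Λ → Λ → k)
    -- `B` is bilinear
    (hadd_l : ∀ x x' y : Λ, B (x + x') y = B x y + B x' y)
    (hsmul_l : ∀ (c : k) (x y : Λ), B (c • x) y = c * B x y)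
    (hadd_r : ∀ x y y' : Λ, B x (y + y') = B x y + B x y')
    (hsmul_r : ∀ (c : k) (x y : Λ), B x (c • y) = c * B x y)
    -- `B` is associative
    (hassoc : ∀ x y z : Λ, B (x * y) z = B x (y * z))
    -- `B` is nondegenerate
    (hnd : ∀ x : Λ, (∀ y : Λ, B x y = 0) → x = 0) :
    -- the form on `ΛG` takes the stated values on elements `λ ⊗ g`
    (∀ (g g' : G) (a b : Λ), skewForm ρ B (Pi.single g a) (Pi.single g' b) =
      if g * g' = 1 then B a (ρ g b) else 0) ∧
    -- it is nondegenerate: if ⟨x, y⟩ = 0 for all y, then x = 0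
    (∀ x : G → Λ, (∀ y : G → Λ, skewForm ρ B x y = 0) → x = 0) ∧
    -- consequently, ΛG is a Frobenius algebra: it admits a nondegenerate associative
    -- bilinear form
    (∃ B' : (G → Λ) → (G → Λ) → k,
      (∀ x x' y, B' (x + x') y = B' x y + B' x' y) ∧
      (∀ (c : k) x y, B' (c • x) y = c * B' x y) ∧
      (∀ x y y', B' x (y + y') = B' x y + B' x y') ∧
      (∀ (c : k) x y, B' x (c • y) = c * B' x y) ∧
      (∀ x y z, B' (skewMul ρ x y) z = B' x (skewMul ρ y z)) ∧
      (∀ x, (∀ y, B' x y = 0) → x = 0)) :=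
  stmt_2_general k Λ G ρ B hadd_l hsmul_l hadd_r hsmul_r hassoc hnd
end

section
/- Let Λ be a finite-dimensional k-algebra with nondegenerate associative bilinear form ⟨-,-⟩_Λ and associated Nakayama automorphism ν (so ⟨λ, λ'⟩ = ⟨λ', ν(λ)⟩ for all λ, λ'), and suppose ν has finite order n. Let G be the cyclic group of order n generated by ν, acting on Λ, and equip the skew group algebra ΛG with the bilinear form ⟨λ ⊗ ν^i, λ' ⊗ ν^j⟩ = ⟨λ, ν^i(λ')⟩_Λ if i + j ≡ 0 (mod n) and 0 otherwise. Then the map Φ : ΛG → ΛG defined by Φ(λ ⊗ ν^i) = ν(λ) ⊗ ν^i is a k-algebra automorphism of ΛG and satisfies ⟨x, y⟩ = ⟨y, Φ(x)⟩ for all x, y ∈ ΛG; that is, Φ is a Nakayama automorphism of ΛG. -/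
def IsNakayama {α β : Type*} (B : α → α → β) (ν : α → α) : Prop :=
  ∀ a b, B a b = B b (ν a)

section

variable {k Λ G : Type*} [Field k] [Ring Λ] [Algebra k Λ] [Group G] [Fintype G]

def isometrySubgroup (B : Λ → Λ → k) : Subgroup (Λ ≃ₐ[k] Λ) where
  carrier := {σ | ∀ a b, B (σ a) (σ b) = B a b}
  one_mem' _ _ := rfl
  mul_mem' {σ τ} hσ hτ a b := (hσ (τ a) (τ b)).trans (hτ a b)
  inv_mem' {σ} hσ a b := by
    rw [← hσ, AlgEquiv.aut_inv, AlgEquiv.apply_symm_apply, AlgEquiv.apply_symm_apply]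

theorem IsNakayama.mem_isometrySubgroup {B : Λ → Λ → k} {ν : Λ ≃ₐ[k] Λ}
    (hν : IsNakayama B ν) : ν ∈ isometrySubgroup B := fun a b =>
  (hν b (ν a)).symm.trans (hν a b).symm

theorem isometrySubgroup_apply_inv_left {B : Λ → Λ → k} {σ : Λ ≃ₐ[k] Λ}
    (hσ : σ ∈ isometrySubgroup B) (a b : Λ) : B (σ a) b = B a (σ⁻¹ b) := by
  simpa using hσ a (σ⁻¹ b)

theorem comp_skewMul_of_commute (ρ : G →* (Λ ≃ₐ[k] Λ)) (σ : Λ ≃ₐ[k] Λ)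
    (hσ : ∀ g, Commute σ (ρ g)) (f f' : G → Λ) :
    (fun x => σ (skewMul ρ f f' x)) = skewMul ρ (fun x => σ (f x)) (fun x => σ (f' x)) := by
  funext x
  simp only [skewMul, map_sum, map_mul, ← AlgEquiv.mul_apply, (hσ _).eq]

theorem IsNakayama.skewForm (ρ : G →* (Λ ≃ₐ[k] Λ)) {B : Λ → Λ → k} {ν : Λ ≃ₐ[k] Λ}
    (hν : IsNakayama B ν) (hρ : ∀ g, ρ g ∈ isometrySubgroup B) :
    IsNakayama (skewForm ρ B) (fun x g => ν (x g)) := fun x y =>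
  Fintype.sum_equiv (Equiv.inv G) _ _ fun g => by
    rw [hν, isometrySubgroup_apply_inv_left (hρ g), ← map_inv, Equiv.inv_apply, inv_inv]

end

theorem stmt_4_general (k Λ G : Type*) [Field k] [Ring Λ] [Algebra k Λ]
    [Group G] [Fintype G] [DecidableEq G]
    (B : Λ → Λ → k)
    -- `ν` is the associated Nakayama automorphism, of finite order `n`
    (ν : Λ ≃ₐ[k] Λ) (hν : ∀ a b : Λ, B a b = B b (ν a))
    -- `G` is the cyclic group of order `n` generated by `ν`, acting on `Λ` via `ρ`:
    -- it is generated by an element `g₀` of order `n` which acts as `ν`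
    (ρ : G →* (Λ ≃ₐ[k] Λ)) (g₀ : G) (hg₀ : ρ g₀ = ν)
    (hgen : ∀ g : G, g ∈ Subgroup.zpowers g₀) :
    -- `Φ : f ↦ ν ∘ f` (i.e. `λ ⊗ ν^i ↦ ν(λ) ⊗ ν^i`) is a `k`-algebra automorphism of ΛG:
    (∀ f f' : G → Λ, (fun h : G → Λ => fun g => ν (h g)) (f + f') =
      (fun g => ν (f g)) + fun g => ν (f' g)) ∧
    (∀ (c : k) (f : G → Λ), (fun g => ν ((c • f) g)) = c • fun g => ν (f g)) ∧
    ((fun g => ν ((Pi.single (1 : G) (1 : Λ) : G → Λ) g)) = (Pi.single (1 : G) (1 : Λ) : G → Λ)) ∧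
    (∀ f f' : G → Λ, (fun g => ν (skewMul ρ f f' g)) =
      skewMul ρ (fun g => ν (f g)) (fun g => ν (f' g))) ∧
    Function.Bijective (fun (f : G → Λ) => (fun g => ν (f g) : G → Λ)) ∧
    -- and it satisfies the Nakayama property ⟨x, y⟩ = ⟨y, Φ(x)⟩
    (∀ x y : G → Λ, skewForm ρ B x y = skewForm ρ B y fun g => ν (x g)) := by
  have hρν : ∀ g, ρ g ∈ Subgroup.zpowers ν := fun g => by
    obtain ⟨i, rfl⟩ := hgen g
    exact ⟨i, by simp only [map_zpow, hg₀]⟩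
  have hcomm : ∀ g, Commute ν (ρ g) := fun g => by
    obtain ⟨i, hi⟩ := hρν g
    exact hi ▸ (Commute.refl ν).zpow_right i
  have hisom : ∀ g, ρ g ∈ isometrySubgroup B := fun g =>
    Subgroup.zpowers_le.mpr (IsNakayama.mem_isometrySubgroup hν) (hρν g)
  refine ⟨fun f f' => ?_, fun c f => ?_, ?_, comp_skewMul_of_commute ρ ν hcomm,
    ν.bijective.comp_left, IsNakayama.skewForm ρ hν hisom⟩
  · funext g; simp
  · funext g; simp
  · funext g; by_cases h : g = 1 <;> simp [h]

/-- Let `Λ` be a finite-dimensional `k`-algebra with nondegenerate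
associative bilinear form `B` and Nakayama automorphism `ν` of finite order `n`, and let
`G` be the cyclic group of order `n` generated by `ν`, acting on `Λ`.  Then the map
`Φ(λ ⊗ ν^i) = ν(λ) ⊗ ν^i` is a `k`-algebra automorphism of `ΛG` satisfying
`⟨x, y⟩ = ⟨y, Φ(x)⟩` for all `x, y ∈ ΛG`; that is, `Φ` is a Nakayama automorphism
of `ΛG`. -/
theorem stmt_4 (k Λ G : Type*) [Field k] [Ring Λ] [Algebra k Λ] [FiniteDimensional k Λ]
    [Group G] [Fintype G] [DecidableEq G]
    (B : Λ → Λ → k)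
    -- `B` is bilinear
    (hadd_l : ∀ x x' y : Λ, B (x + x') y = B x y + B x' y)
    (hsmul_l : ∀ (c : k) (x y : Λ), B (c • x) y = c * B x y)
    (hadd_r : ∀ x y y' : Λ, B x (y + y') = B x y + B x y')
    (hsmul_r : ∀ (c : k) (x y : Λ), B x (c • y) = c * B x y)
    -- `B` is associative
    (hassoc : ∀ x y z : Λ, B (x * y) z = B x (y * z))
    -- `B` is nondegenerate
    (hnd : ∀ x : Λ, (∀ y : Λ, B x y = 0) → x = 0)
    -- `ν` is the associated Nakayama automorphism, of finite order `n`
    (ν : Λ ≃ₐ[k] Λ) (hν : ∀ a b : Λ, B a b = B b (ν a))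
    (n : ℕ) (hn : 0 < n) (hord : orderOf ν = n)
    -- `G` is the cyclic group of order `n` generated by `ν`, acting on `Λ` via `ρ`:
    -- it is generated by an element `g₀` of order `n` which acts as `ν`
    (ρ : G →* (Λ ≃ₐ[k] Λ)) (g₀ : G) (hg₀ : ρ g₀ = ν)
    (hgen : ∀ g : G, g ∈ Subgroup.zpowers g₀) (hordg : orderOf g₀ = n) :
    -- `Φ : f ↦ ν ∘ f` (i.e. `λ ⊗ ν^i ↦ ν(λ) ⊗ ν^i`) is a `k`-algebra automorphism of ΛG:
    (∀ f f' : G → Λ, (fun h : G → Λ => fun g => ν (h g)) (f + f') =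
      (fun g => ν (f g)) + fun g => ν (f' g)) ∧
    (∀ (c : k) (f : G → Λ), (fun g => ν ((c • f) g)) = c • fun g => ν (f g)) ∧
    ((fun g => ν ((Pi.single (1 : G) (1 : Λ) : G → Λ) g)) = (Pi.single (1 : G) (1 : Λ) : G → Λ)) ∧
    (∀ f f' : G → Λ, (fun g => ν (skewMul ρ f f' g)) =
      skewMul ρ (fun g => ν (f g)) (fun g => ν (f' g))) ∧
    Function.Bijective (fun (f : G → Λ) => (fun g => ν (f g) : G → Λ)) ∧
    -- and it satisfies the Nakayama property ⟨x, y⟩ = ⟨y, Φ(x)⟩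
    (∀ x y : G → Λ, skewForm ρ B x y = skewForm ρ B y fun g => ν (x g)) :=
  stmt_4_general k Λ G B ν hν ρ g₀ hg₀ hgen
end

section
/- Let A be a finite-dimensional k-algebra and σ a k-algebra automorphism of A. On the twisted trivial extension Δ_σA = A ⊕ D(A)_σ, define a bilinear form B by B((a, f), (b, g)) = g(a) + f(σ(b)). Then B is nondegenerate and associative, and the map ν : Δ_σA → Δ_σA given by ν(a, f) = (σ^{-1}(a), f ∘ σ) is a k-algebra automorphism satisfying B(x, y) = B(y, ν(x)) for all x, y ∈ Δ_σA; that is, the twisted trivial extension of A with respect to σ has Nakayama automorphism given by σ^{-1}. -/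
/-- The multiplication of the twisted trivial extension `Δ_σA = A ⊕ D(A)_σ`, modeled on
`A × (A →ₗ[k] k)`: `(a, f)(b, g) = (ab, a·g + f·b)`, where `D(A)_σ` carries the twisted
bimodule structure `(a·f·b)(x) = f(σ(b)xa)`, so `(a·g)(x) = g(xa)` and
`(f·b)(x) = f(σ(b)x)`. -/
def twTrivExtMul {k A : Type*} [Field k] [Ring A] [Algebra k A] (σ : A ≃ₐ[k] A)
    (p q : A × (A →ₗ[k] k)) : A × (A →ₗ[k] k) :=
  (p.1 * q.1, q.2 ∘ₗ LinearMap.mulRight k p.1 + p.2 ∘ₗ LinearMap.mulLeft k (σ q.1))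

/-- The bilinear form `B((a, f), (b, g)) = g(a) + f(σ(b))` on the twisted trivial
extension `Δ_σA`. -/
def twTrivExtForm {k A : Type*} [Field k] [Ring A] [Algebra k A] (σ : A ≃ₐ[k] A)
    (p q : A × (A →ₗ[k] k)) : k :=
  q.2 p.1 + p.2 (σ q.1)

/-!
For `x = (a, f)`, `y = (b, g)`, `z = (c, h)` both `B(xy, z)` and `B(x, yz)` expand to
`h(ab) + g(σ(c)a) + f(σ(b)σ(c))`, and `B(y, ν x) = f(σ b) + g(a) = B(x, y)`. The form pairs
the `A`-component of each argument with the dual component of the other, so it is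
nondegenerate because linear forms separate the points of `A`.
The twist by `σ` in the right action `(f·b)(x) = f(σ(b)x)` is what makes `ν = σ⁻¹ × σ^*`
multiplicative.
-/

namespace TwTrivExt

variable {k A : Type*} [Field k] [Ring A] [Algebra k A] (σ : A ≃ₐ[k] A)

theorem eq_zero_of_forall_twTrivExtForm_eq_zero {p : A × (A →ₗ[k] k)}
    (hp : ∀ q, twTrivExtForm σ p q = 0) : p = 0 := by
  obtain ⟨a, f⟩ := p
  have ha : a = 0 := (Module.forall_dual_apply_eq_zero_iff k a).mp fun g => by
    simpa [twTrivExtForm] using hp (0, g)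
  have hf : f = 0 := LinearMap.ext fun x => by
    simpa [twTrivExtForm] using hp (σ.symm x, 0)
  simp [ha, hf]

theorem twTrivExtForm_twTrivExtMul_left (p q r : A × (A →ₗ[k] k)) :
    twTrivExtForm σ (twTrivExtMul σ p q) r = twTrivExtForm σ p (twTrivExtMul σ q r) := by
  simp only [twTrivExtForm, twTrivExtMul, LinearMap.add_apply, LinearMap.comp_apply,
    LinearMap.mulRight_apply, LinearMap.mulLeft_apply, map_mul]
  ring

def nakayama : (A × (A →ₗ[k] k)) ≃ₗ[k] A × (A →ₗ[k] k) :=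
  σ.symm.toLinearEquiv.prodCongr σ.toLinearEquiv.dualMap

theorem nakayama_apply (p : A × (A →ₗ[k] k)) :
    nakayama σ p = (σ.symm p.1, p.2 ∘ₗ σ.toLinearMap) :=
  rfl

theorem nakayama_one : nakayama σ ((1 : A), (0 : A →ₗ[k] k)) = (1, 0) := by
  simp [nakayama_apply]

theorem nakayama_twTrivExtMul (p q : A × (A →ₗ[k] k)) :
    nakayama σ (twTrivExtMul σ p q) = twTrivExtMul σ (nakayama σ p) (nakayama σ q) := by
  ext x
  · simp [nakayama_apply, twTrivExtMul]
  · simp [nakayama_apply, twTrivExtMul, map_mul]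

theorem twTrivExtForm_nakayama (p q : A × (A →ₗ[k] k)) :
    twTrivExtForm σ q (nakayama σ p) = twTrivExtForm σ p q := by
  simp [twTrivExtForm, nakayama_apply, add_comm]

end TwTrivExt

theorem stmt_9_general (k A : Type*) [Field k] [Ring A] [Algebra k A]
    (σ : A ≃ₐ[k] A) :
    -- the form is nondegenerate
    (∀ p : A × (A →ₗ[k] k),
      (∀ q : A × (A →ₗ[k] k), twTrivExtForm σ p q = 0) → p = 0) ∧
    -- and associative
    (∀ p q r : A × (A →ₗ[k] k),
      twTrivExtForm σ (twTrivExtMul σ p q) r = twTrivExtForm σ p (twTrivExtMul σ q r)) ∧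
    -- `ν(a, f) = (σ⁻¹(a), f ∘ σ)` is a `k`-algebra automorphism of `Δ_σA`:
    (∀ p p' : A × (A →ₗ[k] k),
      (fun q : A × (A →ₗ[k] k) => (σ.symm q.1, q.2 ∘ₗ σ.toLinearMap)) (p + p') =
        (σ.symm p.1, p.2 ∘ₗ σ.toLinearMap) + (σ.symm p'.1, p'.2 ∘ₗ σ.toLinearMap)) ∧
    (∀ (c : k) (p : A × (A →ₗ[k] k)),
      (σ.symm (c • p).1, (c • p).2 ∘ₗ σ.toLinearMap) =
        c • ((σ.symm p.1, p.2 ∘ₗ σ.toLinearMap) : A × (A →ₗ[k] k))) ∧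
    ((σ.symm (1 : A), (0 : A →ₗ[k] k) ∘ₗ σ.toLinearMap) =
      ((1 : A), (0 : A →ₗ[k] k))) ∧
    (∀ p q : A × (A →ₗ[k] k),
      (σ.symm (twTrivExtMul σ p q).1, (twTrivExtMul σ p q).2 ∘ₗ σ.toLinearMap) =
        twTrivExtMul σ (σ.symm p.1, p.2 ∘ₗ σ.toLinearMap)
          (σ.symm q.1, q.2 ∘ₗ σ.toLinearMap)) ∧
    Function.Bijective
      (fun p : A × (A →ₗ[k] k) => ((σ.symm p.1, p.2 ∘ₗ σ.toLinearMap) : A × (A →ₗ[k] k))) ∧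
    -- and it is a Nakayama automorphism: B(x, y) = B(y, ν(x))
    (∀ p q : A × (A →ₗ[k] k),
      twTrivExtForm σ p q = twTrivExtForm σ q (σ.symm p.1, p.2 ∘ₗ σ.toLinearMap)) := by
  open TwTrivExt in
  exact ⟨fun _ => eq_zero_of_forall_twTrivExtForm_eq_zero σ,
    twTrivExtForm_twTrivExtMul_left σ, (nakayama σ).map_add, (nakayama σ).map_smul,
    nakayama_one σ, nakayama_twTrivExtMul σ, (nakayama σ).bijective,
    fun p q => (twTrivExtForm_nakayama σ p q).symm⟩

/-- Let `A` be a finite-dimensional `k`-algebra and `σ` a `k`-algebra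
automorphism of `A`.  On the twisted trivial extension `Δ_σA = A ⊕ D(A)_σ`, the bilinear
form `B((a, f), (b, g)) = g(a) + f(σ(b))` is nondegenerate and associative, and the map
`ν(a, f) = (σ⁻¹(a), f ∘ σ)` is a `k`-algebra automorphism satisfying
`B(x, y) = B(y, ν(x))`; that is, the twisted trivial extension of `A` with respect to
`σ` has Nakayama automorphism given by `σ⁻¹`. -/
theorem stmt_9 (k A : Type*) [Field k] [Ring A] [Algebra k A] [FiniteDimensional k A]
    (σ : A ≃ₐ[k] A) :
    -- the form is nondegenerate
    (∀ p : A × (A →ₗ[k] k),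
      (∀ q : A × (A →ₗ[k] k), twTrivExtForm σ p q = 0) → p = 0) ∧
    -- and associative
    (∀ p q r : A × (A →ₗ[k] k),
      twTrivExtForm σ (twTrivExtMul σ p q) r = twTrivExtForm σ p (twTrivExtMul σ q r)) ∧
    -- `ν(a, f) = (σ⁻¹(a), f ∘ σ)` is a `k`-algebra automorphism of `Δ_σA`:
    (∀ p p' : A × (A →ₗ[k] k),
      (fun q : A × (A →ₗ[k] k) => (σ.symm q.1, q.2 ∘ₗ σ.toLinearMap)) (p + p') =
        (σ.symm p.1, p.2 ∘ₗ σ.toLinearMap) + (σ.symm p'.1, p'.2 ∘ₗ σ.toLinearMap)) ∧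
    (∀ (c : k) (p : A × (A →ₗ[k] k)),
      (σ.symm (c • p).1, (c • p).2 ∘ₗ σ.toLinearMap) =
        c • ((σ.symm p.1, p.2 ∘ₗ σ.toLinearMap) : A × (A →ₗ[k] k))) ∧
    ((σ.symm (1 : A), (0 : A →ₗ[k] k) ∘ₗ σ.toLinearMap) =
      ((1 : A), (0 : A →ₗ[k] k))) ∧
    (∀ p q : A × (A →ₗ[k] k),
      (σ.symm (twTrivExtMul σ p q).1, (twTrivExtMul σ p q).2 ∘ₗ σ.toLinearMap) =
        twTrivExtMul σ (σ.symm p.1, p.2 ∘ₗ σ.toLinearMap)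
          (σ.symm q.1, q.2 ∘ₗ σ.toLinearMap)) ∧
    Function.Bijective
      (fun p : A × (A →ₗ[k] k) => ((σ.symm p.1, p.2 ∘ₗ σ.toLinearMap) : A × (A →ₗ[k] k))) ∧
    -- and it is a Nakayama automorphism: B(x, y) = B(y, ν(x))
    (∀ p q : A × (A →ₗ[k] k),
      twTrivExtForm σ p q = twTrivExtForm σ q (σ.symm p.1, p.2 ∘ₗ σ.toLinearMap)) :=
  stmt_9_general k A σ
end

section
/- Let Λ = Λ₀ ⊕ Λ₁ ⊕ Λ₂ be a finite-dimensional graded k-algebra concentrated in degrees 0, 1, 2 (so Λ_i·Λ_j ⊆ Λ_{i+j}, with components vanishing in degrees > 2). Equip Λ with the Z/2-grading whose even part is Λ₀ ⊕ Λ₂ and whose odd part is Λ₁, and form the smash product Λ # (Z/2)^*: the vector space Λ ⊗ k(Z/2)^* with basis elements λ p_g (g ∈ Z/2) and multiplication λ p_g · λ' p_h = λ λ'_{g-h} p_h, where λ'_{g-h} is the Z/2-degree (g−h) component of λ'. Then Λ # (Z/2)^* is isomorphic as a k-algebra to the 2-quasi-Veronese algebra Λ^{[2]}, namely the 2×2 matrix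 algebra whose (1,1)- and (2,2)-entries are Λ₀ ⊕ Λ₂, whose (1,2)- and (2,1)-entries are Λ₁, with multiplication of entries induced by the multiplication of Λ (products landing in degrees > 2 being zero), i.e. Λ^{[2]} = [[Λ₀, Λ₁],[0, Λ₀]] ⊕ [[Λ₂, 0],[Λ₁, Λ₂]]. -/
open DirectSum

section

variable {k Λ : Type*} [Field k] [Ring Λ] [Algebra k Λ]
variable (𝒜 : ℕ → Submodule k Λ) [GradedRing 𝒜]

/-- The even part (`ℤ/2`-degree `0` component) of an element of a graded algebra
concentrated in degrees `0, 1, 2`: the sum of its degree `0` and degree `2` components. -/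
noncomputable def evenPart (x : Λ) : Λ :=
  (DirectSum.decompose 𝒜 x 0 : Λ) + (DirectSum.decompose 𝒜 x 2 : Λ)

/-- The odd part (`ℤ/2`-degree `1` component) of an element of a graded algebra
concentrated in degrees `0, 1, 2`: its degree `1` component. -/
noncomputable def oddPart (x : Λ) : Λ :=
  (DirectSum.decompose 𝒜 x 1 : Λ)

/-- The multiplication of the smash product `Λ # (ℤ/2)^*`, modeled on `Λ × Λ`, a pair
`(x₀, x₁)` standing for `x₀ p₀ + x₁ p₁` with `{p₀, p₁}` the dual basis of `(k(ℤ/2))^*`.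
It is the bilinear extension of `λ p_g · λ' p_h = λ λ'_{g-h} p_h`, where `λ'_{g-h}` is
the `ℤ/2`-degree `g - h` component of `λ'`. -/
noncomputable def smashMul (p q : Λ × Λ) : Λ × Λ :=
  (p.1 * evenPart 𝒜 q.1 + p.2 * oddPart 𝒜 q.1,
   p.1 * oddPart 𝒜 q.2 + p.2 * evenPart 𝒜 q.2)

/-- Multiplication of `2 × 2` matrices with entries in `Λ`, modeled on
`Fin 2 → Fin 2 → Λ`. -/
def matMul2 (m m' : Fin 2 → Fin 2 → Λ) : Fin 2 → Fin 2 → Λ :=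
  fun i j => ∑ l : Fin 2, m i l * m' l j


lemma evenPart_add (x y : Λ) : evenPart 𝒜 (x + y) = evenPart 𝒜 x + evenPart 𝒜 y := by
  unfold evenPart
  simp only [DirectSum.decompose_add, DirectSum.add_apply, Submodule.coe_add]
  abel

lemma oddPart_add (x y : Λ) : oddPart 𝒜 (x + y) = oddPart 𝒜 x + oddPart 𝒜 y := by
  unfold oddPart
  simp only [DirectSum.decompose_add, DirectSum.add_apply, Submodule.coe_add]

lemma evenPart_smul (c : k) (x : Λ) : evenPart 𝒜 (c • x) = c • evenPart 𝒜 x := by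
  unfold evenPart
  rw [DirectSum.decompose_smul]
  simp only [DirectSum.smul_apply, SetLike.val_smul, smul_add]

lemma oddPart_smul (c : k) (x : Λ) : oddPart 𝒜 (c • x) = c • oddPart 𝒜 x := by
  unfold oddPart
  rw [DirectSum.decompose_smul]
  simp only [DirectSum.smul_apply, SetLike.val_smul]

lemma evenPart_mem (x : Λ) : evenPart 𝒜 x ∈ 𝒜 0 ⊔ 𝒜 2 :=
  add_mem (Submodule.mem_sup_left (SetLike.coe_mem _)) (Submodule.mem_sup_right (SetLike.coe_mem _))

lemma oddPart_mem (x : Λ) : oddPart 𝒜 x ∈ 𝒜 1 := SetLike.coe_mem _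

lemma evenPart_of_mem02 {x : Λ} (hx : x ∈ 𝒜 0 ⊔ 𝒜 2) : evenPart 𝒜 x = x := by
  obtain ⟨a, ha, b, hb, rfl⟩ := Submodule.mem_sup.mp hx
  rw [evenPart_add]
  unfold evenPart
  rw [DirectSum.decompose_of_mem_same 𝒜 ha, DirectSum.decompose_of_mem_same 𝒜 hb,
    DirectSum.decompose_of_mem_ne 𝒜 ha (show (0:ℕ) ≠ 2 by norm_num),
    DirectSum.decompose_of_mem_ne 𝒜 hb (show (2:ℕ) ≠ 0 by norm_num)]
  abel

lemma oddPart_of_mem02 {x : Λ} (hx : x ∈ 𝒜 0 ⊔ 𝒜 2) : oddPart 𝒜 x = 0 := by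
  obtain ⟨a, ha, b, hb, rfl⟩ := Submodule.mem_sup.mp hx
  rw [oddPart_add]
  unfold oddPart
  rw [DirectSum.decompose_of_mem_ne 𝒜 ha (show (0:ℕ) ≠ 1 by norm_num),
    DirectSum.decompose_of_mem_ne 𝒜 hb (show (2:ℕ) ≠ 1 by norm_num), add_zero]

lemma evenPart_of_mem1 {x : Λ} (hx : x ∈ 𝒜 1) : evenPart 𝒜 x = 0 := by
  unfold evenPart
  rw [DirectSum.decompose_of_mem_ne 𝒜 hx (show (1:ℕ) ≠ 0 by norm_num),
    DirectSum.decompose_of_mem_ne 𝒜 hx (show (1:ℕ) ≠ 2 by norm_num), add_zero]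

lemma oddPart_of_mem1 {x : Λ} (hx : x ∈ 𝒜 1) : oddPart 𝒜 x = x :=
  DirectSum.decompose_of_mem_same 𝒜 hx

lemma even_add_odd (htop : ∀ i : ℕ, 2 < i → 𝒜 i = ⊥) (x : Λ) :
    evenPart 𝒜 x + oddPart 𝒜 x = x := by
  classical
  have h := DirectSum.sum_support_decompose 𝒜 x
  have hsub : (DirectSum.decompose 𝒜 x).support ⊆ ({0, 1, 2} : Finset ℕ) := by
    intro i hi
    by_contra hni
    simp only [Finset.mem_insert, Finset.mem_singleton] at hni
    have h2 : 2 < i := by omega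
    have hz : (DirectSum.decompose 𝒜 x i : Λ) = 0 := by
      have hm : (DirectSum.decompose 𝒜 x i : Λ) ∈ (⊥ : Submodule k Λ) := by
        rw [← htop i h2]; exact (DirectSum.decompose 𝒜 x i).2
      simpa using hm
    rw [DFinsupp.mem_support_iff] at hi
    exact hi (Subtype.ext hz)
  have hss := Finset.sum_subset hsub
    (f := fun i => (DirectSum.decompose 𝒜 x i : Λ)) ?_
  · rw [h] at hss
    rw [Finset.sum_insert (by norm_num), Finset.sum_insert (by norm_num),
      Finset.sum_singleton] at hss
    unfold evenPart oddPart
    rw [add_right_comm, add_assoc]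
    exact hss.symm
  · intro i _ hi
    rw [DFinsupp.notMem_support_iff] at hi
    simp [hi]

section
variable (htop : ∀ i : ℕ, 2 < i → 𝒜 i = ⊥)
include htop

lemma bot_mul_eq_zero {a b : Λ} {i j : ℕ} (ha : a ∈ 𝒜 i) (hb : b ∈ 𝒜 j) (hij : 2 < i + j) :
    a * b = 0 := by
  have hm : a * b ∈ (⊥ : Submodule k Λ) := by
    rw [← htop _ hij]; exact SetLike.mul_mem_graded ha hb
  simpa using hm

lemma mulEE_mem (x y : Λ) : evenPart 𝒜 x * evenPart 𝒜 y ∈ 𝒜 0 ⊔ 𝒜 2 := by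
  unfold evenPart
  rw [add_mul, mul_add, mul_add]
  refine add_mem (add_mem ?_ ?_) ?_
  · exact Submodule.mem_sup_left
      (by simpa using SetLike.mul_mem_graded (SetLike.coe_mem _) (SetLike.coe_mem (DirectSum.decompose 𝒜 y 0)))
  · exact Submodule.mem_sup_right
      (by simpa using SetLike.mul_mem_graded (SetLike.coe_mem (DirectSum.decompose 𝒜 x 0)) (SetLike.coe_mem (DirectSum.decompose 𝒜 y 2)))
  · refine add_mem (Submodule.mem_sup_right
      (by simpa using SetLike.mul_mem_graded (SetLike.coe_mem (DirectSum.decompose 𝒜 x 2)) (SetLike.coe_mem (DirectSum.decompose 𝒜 y 0)))) ?_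
    rw [bot_mul_eq_zero 𝒜 htop (SetLike.coe_mem (DirectSum.decompose 𝒜 x 2))
      (SetLike.coe_mem (DirectSum.decompose 𝒜 y 2)) (by norm_num)]
    exact zero_mem _

lemma mulEO_mem (x y : Λ) : evenPart 𝒜 x * oddPart 𝒜 y ∈ 𝒜 1 := by
  unfold evenPart oddPart
  rw [add_mul]
  refine add_mem (by simpa using SetLike.mul_mem_graded (SetLike.coe_mem (DirectSum.decompose 𝒜 x 0)) (SetLike.coe_mem (DirectSum.decompose 𝒜 y 1))) ?_
  rw [bot_mul_eq_zero 𝒜 htop (SetLike.coe_mem (DirectSum.decompose 𝒜 x 2))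
    (SetLike.coe_mem (DirectSum.decompose 𝒜 y 1)) (by norm_num)]
  exact zero_mem _

lemma mulOE_mem (x y : Λ) : oddPart 𝒜 x * evenPart 𝒜 y ∈ 𝒜 1 := by
  unfold evenPart oddPart
  rw [mul_add]
  refine add_mem (by simpa using SetLike.mul_mem_graded (SetLike.coe_mem (DirectSum.decompose 𝒜 x 1)) (SetLike.coe_mem (DirectSum.decompose 𝒜 y 0))) ?_
  rw [bot_mul_eq_zero 𝒜 htop (SetLike.coe_mem (DirectSum.decompose 𝒜 x 1))
    (SetLike.coe_mem (DirectSum.decompose 𝒜 y 2)) (by norm_num)]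
  exact zero_mem _

set_option linter.unusedSectionVars false in
lemma mulOO_mem (x y : Λ) : oddPart 𝒜 x * oddPart 𝒜 y ∈ 𝒜 0 ⊔ 𝒜 2 :=
  Submodule.mem_sup_right (by
    simpa using SetLike.mul_mem_graded (oddPart_mem 𝒜 x) (oddPart_mem 𝒜 y))

lemma L1 (x y : Λ) : evenPart 𝒜 (x * evenPart 𝒜 y) = evenPart 𝒜 x * evenPart 𝒜 y := by
  conv_lhs => rw [← even_add_odd 𝒜 htop x, add_mul, evenPart_add,
    evenPart_of_mem02 𝒜 (mulEE_mem 𝒜 htop x y),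
    evenPart_of_mem1 𝒜 (mulOE_mem 𝒜 htop x y), add_zero]

lemma L2 (x y : Λ) : evenPart 𝒜 (x * oddPart 𝒜 y) = oddPart 𝒜 x * oddPart 𝒜 y := by
  conv_lhs => rw [← even_add_odd 𝒜 htop x, add_mul, evenPart_add,
    evenPart_of_mem1 𝒜 (mulEO_mem 𝒜 htop x y),
    evenPart_of_mem02 𝒜 (mulOO_mem 𝒜 htop x y), zero_add]

lemma L3 (x y : Λ) : oddPart 𝒜 (x * evenPart 𝒜 y) = oddPart 𝒜 x * evenPart 𝒜 y := by
  conv_lhs => rw [← even_add_odd 𝒜 htop x, add_mul, oddPart_add,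
    oddPart_of_mem02 𝒜 (mulEE_mem 𝒜 htop x y),
    oddPart_of_mem1 𝒜 (mulOE_mem 𝒜 htop x y), zero_add]

lemma L4 (x y : Λ) : oddPart 𝒜 (x * oddPart 𝒜 y) = evenPart 𝒜 x * oddPart 𝒜 y := by
  conv_lhs => rw [← even_add_odd 𝒜 htop x, add_mul, oddPart_add,
    oddPart_of_mem1 𝒜 (mulEO_mem 𝒜 htop x y),
    oddPart_of_mem02 𝒜 (mulOO_mem 𝒜 htop x y), add_zero]

end

/-- Let `Λ = Λ₀ ⊕ Λ₁ ⊕ Λ₂` be a finite-dimensional graded `k`-algebra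
concentrated in degrees `0, 1, 2`, with the `ℤ/2`-grading whose even part is `Λ₀ ⊕ Λ₂`
and whose odd part is `Λ₁`.  Then the smash product `Λ # (ℤ/2)^*` is isomorphic as a
`k`-algebra to the `2`-quasi-Veronese algebra
`Λ^{[2]} = [[Λ₀, Λ₁], [0, Λ₀]] ⊕ [[Λ₂, 0], [Λ₁, Λ₂]]`, i.e. the algebra of `2 × 2`
matrices whose diagonal entries lie in `Λ₀ ⊕ Λ₂` and whose off-diagonal entries lie in
`Λ₁`, with multiplication of entries induced by that of `Λ`. -/
theorem stmt_16 (k Λ : Type*) [Field k] [Ring Λ] [Algebra k Λ] [FiniteDimensional k Λ]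
    (𝒜 : ℕ → Submodule k Λ) [GradedRing 𝒜]
    -- the grading is concentrated in degrees 0, 1, 2
    (htop : ∀ i : ℕ, 2 < i → 𝒜 i = ⊥) :
    ∃ e : Λ × Λ → (Fin 2 → Fin 2 → Λ),
      -- `e` is additive and `k`-linear
      (∀ p q : Λ × Λ, e (p + q) = e p + e q) ∧
      (∀ (c : k) (p : Λ × Λ), e (c • p) = c • e p) ∧
      -- `e` is injective
      Function.Injective e ∧
      -- the image of `e` is exactly the set of matrices with entries in
      -- `[[Λ₀ ⊕ Λ₂, Λ₁], [Λ₁, Λ₀ ⊕ Λ₂]]`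
      (∀ p : Λ × Λ,
        e p 0 0 ∈ 𝒜 0 ⊔ 𝒜 2 ∧ e p 0 1 ∈ 𝒜 1 ∧ e p 1 0 ∈ 𝒜 1 ∧ e p 1 1 ∈ 𝒜 0 ⊔ 𝒜 2) ∧
      (∀ m : Fin 2 → Fin 2 → Λ,
        m 0 0 ∈ 𝒜 0 ⊔ 𝒜 2 → m 0 1 ∈ 𝒜 1 → m 1 0 ∈ 𝒜 1 → m 1 1 ∈ 𝒜 0 ⊔ 𝒜 2 →
          ∃ p : Λ × Λ, e p = m) ∧
      -- `e` is multiplicative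
      (∀ p q : Λ × Λ, e (smashMul 𝒜 p q) = matMul2 (e p) (e q)) ∧
      -- and unital: the unit of the smash product is `1 p₀ + 1 p₁`, that of the
      -- quasi-Veronese is the identity matrix
      e ((1 : Λ), (1 : Λ)) = fun i j => if i = j then (1 : Λ) else 0 := by
  refine ⟨fun p => ![![evenPart 𝒜 p.1, oddPart 𝒜 p.2], ![oddPart 𝒜 p.1, evenPart 𝒜 p.2]],
    ?_, ?_, ?_, ?_, ?_, ?_, ?_⟩
  · intro p q
    funext i j
    fin_cases i <;> fin_cases j <;>
      simp [evenPart_add, oddPart_add]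
  · intro c p
    funext i j
    fin_cases i <;> fin_cases j <;>
      simp [evenPart_smul, oddPart_smul]
  · intro p q h
    have h00 := congrFun (congrFun h 0) 0
    have h01 := congrFun (congrFun h 0) 1
    have h10 := congrFun (congrFun h 1) 0
    have h11 := congrFun (congrFun h 1) 1
    simp only [Matrix.cons_val_zero, Matrix.cons_val_one, Matrix.head_cons] at h00 h01 h10 h11
    have e1 : p.1 = q.1 := by
      rw [← even_add_odd 𝒜 htop p.1, ← even_add_odd 𝒜 htop q.1, h00, h10]
    have e2 : p.2 = q.2 := by
      rw [← even_add_odd 𝒜 htop p.2, ← even_add_odd 𝒜 htop q.2, h01, h11]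
    exact Prod.ext e1 e2
  · intro p
    refine ⟨?_, ?_, ?_, ?_⟩ <;>
      simp [evenPart_mem, oddPart_mem]
  · intro m h00 h01 h10 h11
    refine ⟨(m 0 0 + m 1 0, m 0 1 + m 1 1), ?_⟩
    funext i j
    fin_cases i <;> fin_cases j <;>
      simp [evenPart_add, oddPart_add, evenPart_of_mem02 𝒜 h00, evenPart_of_mem02 𝒜 h11,
        oddPart_of_mem02 𝒜 h00, oddPart_of_mem02 𝒜 h11, evenPart_of_mem1 𝒜 h01,
        evenPart_of_mem1 𝒜 h10, oddPart_of_mem1 𝒜 h01, oddPart_of_mem1 𝒜 h10]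
  · intro p q
    funext i j
    fin_cases i <;> fin_cases j <;>
      simp [smashMul, matMul2, Fin.sum_univ_two, evenPart_add, oddPart_add,
        L1 𝒜 htop, L2 𝒜 htop, L3 𝒜 htop, L4 𝒜 htop]
  · funext i j
    have h1 : (1 : Λ) ∈ 𝒜 0 := SetLike.one_mem_graded 𝒜
    fin_cases i <;> fin_cases j <;>
      simp [evenPart_of_mem02 𝒜 (Submodule.mem_sup_left h1),
        oddPart_of_mem02 𝒜 (Submodule.mem_sup_left h1)]

end
end
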